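/- Fix m < -1, let n ∈ β⁰ and let V(·; n) : [0, ∞) → ℝ be the unique solution of V'' + 3V' = R(V), V(0) = m, V'(0) = n. Then for every ε ∈ (0, 1) there is a constant C(ε) > 0 such that -C(ε)·e^{-4(1-ε)t} < V(t; n) + 1 < 0 for all t ≥ 0. -/

import Mathlib

/-!
Put `w = V + 1` and `μ = 4(1 - ε)`. Since `V' > 0`, `V` increases, and its limit is `-1`: below
any level `v₁ < -1` the forcing `R` stays below a negative constant, so `V' + 3V` would decrease
linearly while staying bounded below. Near `-1`, writing `V = q - e^q` with `q = Q(V)` close to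
`0`, one checks `R(V) ≤ μ (V + 1)`, hence eventually `w'' + 3w' ≤ μ w`. Because `1` is the
positive root of `λ² + 3λ - 4`, the quantity `z = w' + μ w` satisfies
`(e^{-t} z)' ≤ (μ - 4) e^{-t} w' ≤ 0`; as `z` is bounded below, the nonincreasing `e^{-t} z`
can never become negative. So `w' ≥ -μ w`, i.e. `e^{μ t} w` is nondecreasing.
-/

open Real Filter Set Topology

lemma strictMonoOn_of_hasDerivAt_pos {D : Set ℝ} (hD : Convex ℝ D) {f f' : ℝ → ℝ}
    (hf : ∀ x ∈ D, HasDerivAt f (f' x) x) (hf' : ∀ x ∈ interior D, 0 < f' x) :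
    StrictMonoOn f D :=
  strictMonoOn_of_hasDerivWithinAt_pos hD (fun x hx => (hf x hx).continuousAt.continuousWithinAt)
    (fun x hx => (hf x (interior_subset hx)).hasDerivWithinAt) hf'

lemma monotoneOn_of_hasDerivAt_nonneg {D : Set ℝ} (hD : Convex ℝ D) {f f' : ℝ → ℝ}
    (hf : ∀ x ∈ D, HasDerivAt f (f' x) x) (hf' : ∀ x ∈ interior D, 0 ≤ f' x) :
    MonotoneOn f D :=
  monotoneOn_of_hasDerivWithinAt_nonneg hD
    (fun x hx => (hf x hx).continuousAt.continuousWithinAt)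
    (fun x hx => (hf x (interior_subset hx)).hasDerivWithinAt) hf'

lemma antitoneOn_of_hasDerivAt_nonpos {D : Set ℝ} (hD : Convex ℝ D) {f f' : ℝ → ℝ}
    (hf : ∀ x ∈ D, HasDerivAt f (f' x) x) (hf' : ∀ x ∈ interior D, f' x ≤ 0) :
    AntitoneOn f D :=
  antitoneOn_of_hasDerivWithinAt_nonpos hD
    (fun x hx => (hf x hx).continuousAt.continuousWithinAt)
    (fun x hx => (hf x (interior_subset hx)).hasDerivWithinAt) hf'

lemma nonneg_of_antitoneOn_of_tendsto_zero {f g : ℝ → ℝ} {T t : ℝ} (hf : AntitoneOn f (Ici T))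
    (hg : Tendsto g atTop (𝓝 0)) (hgf : ∀ᶠ s in atTop, g s ≤ f s) (ht : T ≤ t) : 0 ≤ f t :=
  le_of_tendsto hg <| (hgf.and (eventually_ge_atTop t)).mono fun _ ⟨hs, hts⟩ =>
    hs.trans (hf ht (ht.trans hts) hts)

lemma strictMonoOn_sub_exp : StrictMonoOn (fun q => q - exp q) (Iic 0) :=
  strictMonoOn_of_hasDerivAt_pos (convex_Iic 0)
    (fun q _ => (hasDerivAt_id q).sub (hasDerivAt_exp q))
    (fun q hq => by
      rw [interior_Iic] at hq
      simpa using exp_lt_one_iff.2 hq)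

lemma neg_two_mul_one_sub_exp_sq_le {μ q : ℝ} (hμ : μ ≤ 4 * exp q) (hq : q ≤ 0) :
    -2 * (1 - exp q) ^ 2 ≤ μ * (q - exp q + 1) := by
  have hanti : AntitoneOn (fun r => μ * (r - exp r + 1) + 2 * (1 - exp r) ^ 2) (Icc q 0) := by
    refine antitoneOn_of_hasDerivAt_nonpos (convex_Icc q 0) (fun r _ =>
      ((((hasDerivAt_id r).sub (hasDerivAt_exp r)).add_const 1).const_mul μ).add
        (((hasDerivAt_const r 1).sub (hasDerivAt_exp r)).pow 2 |>.const_mul 2)) fun r hr => ?_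
    rw [interior_Icc] at hr
    -- the derivative is `(1 - e^r) (μ - 4 e^r)`
    have h1 : 0 ≤ 1 - exp r := sub_nonneg.2 (exp_le_one_iff.2 hr.2.le)
    have h2 : μ - 4 * exp r ≤ 0 := by linarith [exp_le_exp.2 hr.1.le]
    have := mul_nonpos_of_nonneg_of_nonpos h1 h2
    simp only [Pi.sub_apply]
    norm_num
    nlinarith
  have := hanti ⟨le_rfl, hq⟩ ⟨hq, le_rfl⟩ hq
  simp only [exp_zero] at this
  linarith

section ShootingNonlinearity

variable {Q R : ℝ → ℝ}

lemma Q_le_iff (hQ : ∀ v : ℝ, v < -1 → Q v < 0 ∧ Q v - exp (Q v) = v) {v q : ℝ} (hv : v < -1)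
    (hq : q ≤ 0) : Q v ≤ q ↔ v ≤ q - exp q := by
  obtain ⟨hQv, hQv'⟩ := hQ v hv
  conv_rhs => rw [← hQv']
  exact (strictMonoOn_sub_exp.le_iff_le hQv.le hq).symm

lemma exists_R_le_neg (hQ : ∀ v : ℝ, v < -1 → Q v < 0 ∧ Q v - exp (Q v) = v)
    (hR : ∀ v : ℝ, R v = if v < -1 then -2 * (1 - exp (Q v)) ^ 2 else 4 * (v + 1))
    {v₁ : ℝ} (hv₁ : v₁ < -1) : ∃ c > 0, ∀ v ≤ v₁, R v ≤ -c := by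
  obtain ⟨hQ₁, hQ₁'⟩ := hQ v₁ hv₁
  have h1 : 0 < 1 - exp (Q v₁) := sub_pos.2 (exp_lt_one_iff.2 hQ₁)
  refine ⟨2 * (1 - exp (Q v₁)) ^ 2, by positivity, fun v hv => ?_⟩
  have hv' : v < -1 := hv.trans_lt hv₁
  have hQv : Q v ≤ Q v₁ := (Q_le_iff hQ hv' hQ₁.le).2 (by rw [hQ₁']; exact hv)
  have := exp_le_exp.2 hQv
  rw [hR, if_pos hv']
  nlinarith

lemma R_le_four_mul_add_one (hQ : ∀ v : ℝ, v < -1 → Q v < 0 ∧ Q v - exp (Q v) = v)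
    (hR : ∀ v : ℝ, R v = if v < -1 then -2 * (1 - exp (Q v)) ^ 2 else 4 * (v + 1))
    {a v : ℝ} (ha : 0 < a) (ha1 : a ≤ 1) (hv : log a - a < v) (hv1 : v < -1) :
    R v ≤ 4 * a * (v + 1) := by
  obtain ⟨hQv, hQv'⟩ := hQ v hv1
  have hlog : log a < Q v := by
    by_contra! h
    have := (Q_le_iff hQ hv1 (log_nonpos ha.le ha1)).1 h
    rw [exp_log ha] at this
    linarith
  have h4 : 4 * a ≤ 4 * exp (Q v) := by
    have := exp_lt_exp.2 hlog
    rw [exp_log ha] at this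
    linarith
  have := neg_two_mul_one_sub_exp_sq_le h4 hQv.le
  rw [hQv'] at this
  rwa [hR, if_pos hv1]

end ShootingNonlinearity

lemma exists_lt_of_second_order_le_neg {w w' w'' : ℝ → ℝ} {T k c b : ℝ} (hk : 0 ≤ k)
    (hc : 0 < c) (hw : ∀ t, T ≤ t → HasDerivAt w (w' t) t)
    (hw' : ∀ t, T ≤ t → HasDerivAt w' (w'' t) t) (hpos : ∀ t, T < t → 0 ≤ w' t)
    (hineq : ∀ t, T ≤ t → w t ≤ b → w'' t + k * w' t ≤ -c) : ∃ t, T ≤ t ∧ b < w t := by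
  by_contra! hle
  have hanti : AntitoneOn (fun t => w' t + k * w t + c * t) (Ici T) :=
    antitoneOn_of_hasDerivAt_nonpos (convex_Ici T)
      (fun t ht => ((hw' t ht).add ((hw t ht).const_mul k)).add ((hasDerivAt_id t).const_mul c))
      (fun t ht => by
        rw [interior_Ici] at ht
        linarith [hineq t ht.le (hle t ht.le)])
  have hmono : MonotoneOn w (Ici T) :=
    monotoneOn_of_hasDerivAt_nonneg (convex_Ici T) hw (fun t ht => by
      rw [interior_Ici] at ht
      exact hpos t ht)
  set t := T + |w' T| / c + 1 with ht
  have hTt : T < t := by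
    have : 0 ≤ |w' T| / c := by positivity
    linarith
  have hct : c * t = c * T + |w' T| + c := by rw [ht]; field_simp
  have := hanti self_mem_Ici hTt.le hTt.le
  have := hmono self_mem_Ici hTt.le hTt.le
  nlinarith [hpos t hTt, le_abs_self (w' T)]

lemma monotoneOn_exp_mul_of_second_order_le {w w' w'' : ℝ → ℝ} {T k μ b : ℝ} (hμ : 0 ≤ μ)
    (hμk : μ ≤ k + 1) (hw : ∀ t, T ≤ t → HasDerivAt w (w' t) t)
    (hw' : ∀ t, T ≤ t → HasDerivAt w' (w'' t) t) (hpos : ∀ t, T < t → 0 ≤ w' t)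
    (hb : ∀ t, T < t → b ≤ w t) (hineq : ∀ t, T < t → w'' t + k * w' t ≤ μ * w t) :
    MonotoneOn (fun t => exp (μ * t) * w t) (Ici T) := by
  have hz : ∀ t, T ≤ t → 0 ≤ w' t + μ * w t := by
    have hanti : AntitoneOn (fun t => exp (-t) * (w' t + μ * w t)) (Ici T) := by
      refine antitoneOn_of_hasDerivAt_nonpos (convex_Ici T)
        (fun t ht => (hasDerivAt_neg t).exp.mul ((hw' t ht).add ((hw t ht).const_mul μ)))
        fun t ht => ?_
      rw [interior_Ici] at ht
      have : w'' t + μ * w' t - (w' t + μ * w t) ≤ 0 := by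
        nlinarith [hineq t ht, hpos t ht]
      nlinarith [exp_pos (-t)]
    intro t ht
    refine nonneg_of_mul_nonneg_right (nonneg_of_antitoneOn_of_tendsto_zero hanti
      (by simpa using tendsto_exp_neg_atTop_nhds_zero.const_mul (μ * b)) ?_ (t := t) ht)
      (exp_pos (-t))
    filter_upwards [eventually_gt_atTop T] with s hs
    have hz : μ * b ≤ w' s + μ * w s := by nlinarith [hpos s hs, hb s hs]
    nlinarith [mul_le_mul_of_nonneg_left hz (exp_pos (-s)).le]
  refine monotoneOn_of_hasDerivAt_nonneg (convex_Ici T)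
    (fun t ht => ((hasDerivAt_id t).const_mul μ).exp.mul (hw t ht)) fun t ht => ?_
  rw [interior_Ici] at ht
  have := mul_nonneg (exp_pos (μ * t)).le (hz t ht.le)
  simp only [id, mul_one]
  linarith

lemma exists_neg_mul_exp_lt_of_monotoneOn {w : ℝ → ℝ} {T μ b : ℝ} (hμ : 0 ≤ μ) (hT : 0 ≤ T)
    (hb : b < 0) (hwb : ∀ t, 0 ≤ t → b ≤ w t)
    (hmono : MonotoneOn (fun t => exp (μ * t) * w t) (Ici T)) :
    ∃ C > 0, ∀ t, 0 ≤ t → -C * exp (-(μ * t)) < w t := by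
  have hlower : ∀ t, 0 ≤ t → exp (μ * T) * b ≤ exp (μ * t) * w t := by
    intro t ht
    rcases le_total T t with hTt | htT
    · calc exp (μ * T) * b ≤ exp (μ * T) * w T := by gcongr; exact hwb T hT
        _ ≤ exp (μ * t) * w t := hmono self_mem_Ici hTt hTt
    · calc exp (μ * T) * b ≤ exp (μ * t) * b :=
            mul_le_mul_of_nonpos_right (exp_le_exp.2 (by nlinarith)) hb.le
        _ ≤ exp (μ * t) * w t := by gcongr; exact hwb t ht
  have hneg : exp (μ * T) * b < 0 := mul_neg_of_pos_of_neg (exp_pos _) hb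
  refine ⟨-2 * (exp (μ * T) * b), by linarith, fun t ht => ?_⟩
  calc -(-2 * (exp (μ * T) * b)) * exp (-(μ * t))
        = 2 * (exp (μ * T) * b) * exp (-(μ * t)) := by ring
    _ < exp (μ * T) * b * exp (-(μ * t)) := mul_lt_mul_of_pos_right (by linarith) (exp_pos _)
    _ ≤ exp (μ * t) * w t * exp (-(μ * t)) :=
        mul_le_mul_of_nonneg_right (hlower t ht) (exp_pos _).le
    _ = w t := by rw [mul_right_comm, ← exp_add, add_neg_cancel, exp_zero, one_mul]

theorem shooting_solution_decay_rate_general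
    (Q R : ℝ → ℝ)
    (hQ : ∀ v : ℝ, v < -1 → Q v < 0 ∧ Q v - Real.exp (Q v) = v)
    (hR : ∀ v : ℝ, R v = if v < -1 then -2 * (1 - Real.exp (Q v)) ^ 2 else 4 * (v + 1))
    (m n : ℝ)
    (V : ℝ → ℝ)
    (hdiff : ∀ t : ℝ, 0 ≤ t →
      DifferentiableAt ℝ V t ∧ DifferentiableAt ℝ (deriv V) t)
    (hode : ∀ t : ℝ, 0 ≤ t → deriv (deriv V) t + 3 * deriv V t = R (V t))
    (hic : V 0 = m ∧ deriv V 0 = n)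
    (hB0 : ∀ t > 0, 0 < deriv V t ∧ V t ≤ -1) :
    ∀ ε : ℝ, 0 < ε → ε < 1 → ∃ C : ℝ, 0 < C ∧
      ∀ t : ℝ, 0 ≤ t →
        -C * Real.exp (-4 * (1 - ε) * t) < V t + 1 ∧ V t + 1 < 0 := by
  intro ε hε0 hε1
  have hV : ∀ t, 0 ≤ t → HasDerivAt V (deriv V t) t := fun t ht => (hdiff t ht).1.hasDerivAt
  have hV' : ∀ t, 0 ≤ t → HasDerivAt (deriv V) (deriv (deriv V) t) t :=
    fun t ht => (hdiff t ht).2.hasDerivAt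
  have hmono : StrictMonoOn V (Ici 0) :=
    strictMonoOn_of_hasDerivAt_pos (convex_Ici 0) hV fun t ht => by
      rw [interior_Ici] at ht
      exact (hB0 t ht).1
  have hm_le : ∀ t, 0 ≤ t → m ≤ V t := fun t ht =>
    hic.1 ▸ hmono.monotoneOn self_mem_Ici ht ht
  have hlt : ∀ t, 0 ≤ t → V t < -1 := fun t ht =>
    (hmono ht (mem_Ici.2 (by linarith)) (lt_add_one t)).trans_le (hB0 _ (by linarith)).2
  have ha : 0 < 1 - ε := by linarith
  have hv₀ : log (1 - ε) - (1 - ε) < -1 := by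
    linarith [log_lt_sub_one_of_pos ha (by linarith : 1 - ε ≠ 1)]
  obtain ⟨c, hc, hRc⟩ := exists_R_le_neg hQ hR hv₀
  obtain ⟨T, hT, hVT⟩ := exists_lt_of_second_order_le_neg (k := 3) (by norm_num) hc hV hV'
    (fun t ht => (hB0 t ht).1.le) fun t ht hle => (hode t ht).trans_le (hRc _ hle)
  have hexp : MonotoneOn (fun t => exp (4 * (1 - ε) * t) * (V t + 1)) (Ici T) :=
    monotoneOn_exp_mul_of_second_order_le (k := 3) (b := m + 1) (by linarith) (by linarith)
      (fun t ht => (hV t (hT.trans ht)).add_const 1) (fun t ht => hV' t (hT.trans ht))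
      (fun t ht => (hB0 t (hT.trans_lt ht)).1.le)
      (fun t ht => by linarith [hm_le t (hT.trans ht.le)])
      fun t ht => (hode t (hT.trans ht.le)).trans_le <|
        R_le_four_mul_add_one hQ hR ha (by linarith)
          (hVT.trans (hmono hT (hT.trans ht.le) ht)) (hlt t (hT.trans ht.le))
  obtain ⟨C, hC, hCw⟩ := exists_neg_mul_exp_lt_of_monotoneOn (b := m + 1) (by linarith) hT
    (by linarith [hic.1 ▸ hlt 0 le_rfl]) (fun t ht => by linarith [hm_le t ht]) hexp
  refine ⟨C, hC, fun t ht => ⟨?_, by linarith [hlt t ht]⟩⟩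
  simpa only [neg_mul] using hCw t ht

/-- For fixed `m < -1` and `n ∈ β⁰`, the solution `V` of `V'' + 3V' = R(V)`,
`V(0) = m`, `V'(0) = n` satisfies: for every `ε ∈ (0,1)` there is a constant
`C(ε) > 0` with `-C(ε) e^{-4(1-ε)t} < V(t) + 1 < 0` for all `t ≥ 0`. -/
theorem shooting_solution_decay_rate
    (Q R : ℝ → ℝ)
    (hQ : ∀ v : ℝ, v < -1 → Q v < 0 ∧ Q v - Real.exp (Q v) = v)
    (hR : ∀ v : ℝ, R v = if v < -1 then -2 * (1 - Real.exp (Q v)) ^ 2 else 4 * (v + 1))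
    (m n : ℝ) (hm : m < -1)
    (V : ℝ → ℝ)
    (hdiff : ∀ t : ℝ, 0 ≤ t →
      DifferentiableAt ℝ V t ∧ DifferentiableAt ℝ (deriv V) t)
    (hode : ∀ t : ℝ, 0 ≤ t → deriv (deriv V) t + 3 * deriv V t = R (V t))
    (hic : V 0 = m ∧ deriv V 0 = n)
    (hB0 : ∀ t > 0, 0 < deriv V t ∧ V t ≤ -1) :
    ∀ ε : ℝ, 0 < ε → ε < 1 → ∃ C : ℝ, 0 < C ∧
      ∀ t : ℝ, 0 ≤ t →
        -C * Real.exp (-4 * (1 - ε) * t) < V t + 1 ∧ V t + 1 < 0 :=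
  shooting_solution_decay_rate_general Q R hQ hR m n V hdiff hode hic hB0
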